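/- arXiv:2008.02319 — 6 statements merged into one kernel-verified Lean document; each statement's English description precedes it below -/
import Mathlib

section
/- Let G be a nonempty finite type, H : G → ℝ a function, and β ∈ ℝ. Let p(g) = exp(−β H(g))/Z with Z = Σ_{g ∈ G} exp(−β H(g)) be the Gibbs distribution. Then for every probability mass function q on G (q(g) ≥ 0, Σ_g q(g) = 1) satisfying the same energy constraint Σ_g q(g) H(g) = Σ_g p(g) H(g), the Shannon entropy satisfies −Σ_g q(g) ln q(g) ≤ −Σ_g p(g) ln p(g); that is, the Gibbs distribution maximizes entropy among all distributions with the prescribed expected energy. -/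
open Real

/-! By `log x ≤ x - 1`, the Gibbs inequality `∑ q log p ≤ ∑ q log q` holds for any two
distributions. Since `log p = -β H - log Z` is affine in the energy, the cross entropy
`-∑ q log p` depends only on the expected energy of `q`, so it equals the entropy of `p`. -/

namespace Real

lemma mul_log_sub_mul_log_le_sub {p q : ℝ} (hp : 0 < p) (hq : 0 ≤ q) :
    q * log p - q * log q ≤ p - q := by
  rcases hq.eq_or_lt with rfl | hq
  · simpa using hp.le
  have h := mul_le_mul_of_nonneg_left (log_le_sub_one_of_pos (div_pos hp hq)) hq.le
  rwa [log_div hp.ne' hq.ne', mul_sub, mul_sub, mul_one, mul_div_cancel₀ _ hq.ne'] at h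

lemma sum_mul_log_le_sum_mul_log {ι : Type*} (s : Finset ι) {p q : ι → ℝ}
    (hp : ∀ i ∈ s, 0 < p i) (hq : ∀ i ∈ s, 0 ≤ q i) (hpq : ∑ i ∈ s, p i ≤ ∑ i ∈ s, q i) :
    ∑ i ∈ s, q i * log (p i) ≤ ∑ i ∈ s, q i * log (q i) := by
  have h : ∑ i ∈ s, (q i * log (p i) - q i * log (q i)) ≤ ∑ i ∈ s, (p i - q i) :=
    Finset.sum_le_sum fun i hi ↦ mul_log_sub_mul_log_le_sub (hp i hi) (hq i hi)
  rw [Finset.sum_sub_distrib, Finset.sum_sub_distrib] at h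
  linarith

lemma sum_mul_log_exp_div {ι : Type*} (s : Finset ι) (E q : ι → ℝ) {Z : ℝ} (hZ : Z ≠ 0) :
    ∑ i ∈ s, q i * log (exp (E i) / Z) = ∑ i ∈ s, q i * E i - (∑ i ∈ s, q i) * log Z := by
  simp only [log_div (exp_pos _).ne' hZ, log_exp, mul_sub, Finset.sum_sub_distrib, Finset.sum_mul]

end Real

theorem gibbs_maximizes_entropy_general
    {G : Type*} [Fintype G] (H : G → ℝ) (β : ℝ)
    (Z : ℝ) (hZ : Z = ∑ g, Real.exp (-β * H g))
    (p : G → ℝ) (hp : ∀ g, p g = Real.exp (-β * H g) / Z)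
    (q : G → ℝ) (hq0 : ∀ g, 0 ≤ q g) (hq1 : ∑ g, q g = 1)
    (hE : ∑ g, q g * H g = ∑ g, p g * H g) :
    -∑ g, q g * Real.log (q g) ≤ -∑ g, p g * Real.log (p g) := by
  obtain ⟨g₀, -, -⟩ := Finset.exists_ne_zero_of_sum_ne_zero (hq1 ▸ one_ne_zero)
  have hZpos : 0 < Z := hZ ▸ Finset.sum_pos (fun g _ ↦ exp_pos _) ⟨g₀, Finset.mem_univ _⟩
  have hp_pos : ∀ g, 0 < p g := fun g ↦ hp g ▸ div_pos (exp_pos _) hZpos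
  have hp_sum : ∑ g, p g = 1 := by
    simp only [hp, ← Finset.sum_div, ← hZ, div_self hZpos.ne']
  have energy (r : G → ℝ) : ∑ g, r g * (-β * H g) = -β * ∑ g, r g * H g := by
    simp only [Finset.mul_sum, mul_left_comm (-β)]
  have cross_entropy (r : G → ℝ) (hr : ∑ g, r g = 1) :
      ∑ g, r g * log (p g) = -β * ∑ g, r g * H g - log Z := by
    simp only [hp]
    rw [sum_mul_log_exp_div _ _ _ hZpos.ne', energy, hr, one_mul]
  have gibbs := sum_mul_log_le_sum_mul_log Finset.univ (fun g _ ↦ hp_pos g) (fun g _ ↦ hq0 g)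
    (hp_sum.trans hq1.symm).le
  rw [cross_entropy q hq1, hE, ← cross_entropy p hp_sum] at gibbs
  linarith

/-- The Gibbs distribution `p g = exp(−β H g)/Z` maximizes the Shannon entropy
`−Σ q g ln (q g)` among all probability distributions `q` on `G` with the same
expected energy `Σ q g * H g = Σ p g * H g`. -/
theorem gibbs_maximizes_entropy
    {G : Type*} [Fintype G] [Nonempty G] (H : G → ℝ) (β : ℝ)
    (Z : ℝ) (hZ : Z = ∑ g, Real.exp (-β * H g))
    (p : G → ℝ) (hp : ∀ g, p g = Real.exp (-β * H g) / Z)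
    (q : G → ℝ) (hq0 : ∀ g, 0 ≤ q g) (hq1 : ∑ g, q g = 1)
    (hE : ∑ g, q g * H g = ∑ g, p g * H g) :
    -∑ g, q g * Real.log (q g) ≤ -∑ g, p g * Real.log (p g) :=
  gibbs_maximizes_entropy_general H β Z hZ p hp q hq0 hq1 hE
end

section
/- For all real a, b > 0 with a ≠ b, the integral ∫₀^∞ (ln t)/((t + a)(t + b)) dt converges and equals ((ln a)² − (ln b)²)/(2(a − b)). -/
/-!
Substituting `t ↦ ab/t` maps `(0, ∞)` to itself and turns `log t / ((t + a)(t + b)) dt` into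
`(log (ab) - log t) / ((t + a)(t + b)) dt`. Hence `2 I = log (ab) · J` with
`J = ∫₀^∞ dt / ((t + a)(t + b)) = (log a - log b) / (a - b)`, computed from the antiderivative
`(log (t + a) - log (t + b)) / (b - a)`.
-/

open Real MeasureTheory Set Filter Topology

theorem integral_comp_div_Ioi {E : Type*} [NormedAddCommGroup E] [NormedSpace ℝ E]
    (g : ℝ → E) {c : ℝ} (hc : 0 < c) :
    ∫ x in Ioi 0, (c / x ^ 2) • g (c / x) = ∫ y in Ioi 0, g y := by
  have himage : (c / ·) '' Ioi 0 = Ioi (0 : ℝ) := by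
    refine (MapsTo.image_subset fun x hx => div_pos hc hx).antisymm fun y hy => ?_
    exact ⟨c / y, div_pos hc hy, div_div_cancel₀ hc.ne'⟩
  have hderiv : ∀ x ∈ Ioi (0 : ℝ), HasDerivWithinAt (c / ·) (-c / x ^ 2) (Ioi 0) x := by
    intro x hx
    have := (hasDerivAt_inv (ne_of_gt hx)).const_mul c
    simpa [div_eq_mul_inv, neg_div] using this.hasDerivWithinAt
  have hinj : InjOn (c / ·) (Ioi (0 : ℝ)) := fun x _ y _ h =>
    inv_injective ((mul_right_injective₀ hc.ne') h)
  have := integral_image_eq_integral_abs_deriv_smul measurableSet_Ioi hderiv hinj g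
  rw [himage] at this
  rw [this]
  refine setIntegral_congr_fun measurableSet_Ioi fun x _ => ?_
  rw [abs_div, abs_neg, abs_of_pos hc, abs_of_nonneg (sq_nonneg x)]

theorem tendsto_log_add_sub_log_add (a b : ℝ) :
    Tendsto (fun t => log (t + a) - log (t + b)) atTop (𝓝 0) := by
  simpa using (tendsto_log_comp_add_sub_log a).sub (tendsto_log_comp_add_sub_log b)

theorem hasDerivAt_log_add_sub_log_add_div {a b x : ℝ} (hab : a ≠ b) (ha : x + a ≠ 0)
    (hb : x + b ≠ 0) :
    HasDerivAt (fun t => (log (t + a) - log (t + b)) / (b - a)) ((x + a) * (x + b))⁻¹ x := by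
  have hlog (c : ℝ) (hc : x + c ≠ 0) : HasDerivAt (fun t => log (t + c)) (x + c)⁻¹ x := by
    simpa using ((hasDerivAt_id x).add_const c).log hc
  refine (((hlog a ha).sub (hlog b hb)).div_const (b - a)).congr_deriv ?_
  have : b - a ≠ 0 := sub_ne_zero.2 hab.symm
  field_simp
  ring

section

variable {a b : ℝ}

theorem integrableOn_Ioc_log_div_mul_add_add (ha : 0 < a) (hb : 0 < b) :
    IntegrableOn (fun t => log t / ((t + a) * (t + b))) (Ioc 0 1) := by
  have hlog : IntegrableOn log (Ioc 0 1) :=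
    (intervalIntegrable_iff_integrableOn_Ioc_of_le zero_le_one).1
      intervalIntegral.intervalIntegrable_log'
  refine (hlog.norm.const_mul (a * b)⁻¹).mono' (by fun_prop : Measurable _).aestronglyMeasurable
    ?_
  filter_upwards [ae_restrict_mem measurableSet_Ioc] with t ⟨ht, _⟩
  calc ‖log t / ((t + a) * (t + b))‖ = ‖log t‖ / ((t + a) * (t + b)) := by
        rw [norm_div, Real.norm_of_nonneg (by positivity : 0 ≤ (t + a) * (t + b))]
    _ ≤ ‖log t‖ / (a * b) := by gcongr <;> nlinarith
    _ = (a * b)⁻¹ * ‖log t‖ := div_eq_inv_mul _ _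

theorem integrableOn_Ioi_one_log_div_mul_add_add (ha : 0 ≤ a) (hb : 0 ≤ b) :
    IntegrableOn (fun t => log t / ((t + a) * (t + b))) (Ioi 1) := by
  refine ((integrableOn_Ioi_rpow_of_lt (by norm_num : (-3 / 2 : ℝ) < -1) one_pos).const_mul
    2).mono' (by fun_prop : Measurable _).aestronglyMeasurable ?_
  filter_upwards [ae_restrict_mem measurableSet_Ioi] with t (ht : 1 < t)
  have ht0 : 0 < t := one_pos.trans ht
  calc ‖log t / ((t + a) * (t + b))‖ = log t / ((t + a) * (t + b)) :=
        Real.norm_of_nonneg (by have := log_nonneg ht.le; positivity)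
    _ ≤ 2 * t ^ (1 / 2 : ℝ) / t ^ (2 : ℝ) := by
        have hlog : log t ≤ 2 * t ^ (1 / 2 : ℝ) :=
          (log_le_rpow_div (ε := 1 / 2) ht0.le (by norm_num)).trans_eq (by ring)
        have hden : t ^ (2 : ℝ) ≤ (t + a) * (t + b) := by rw [rpow_two]; nlinarith
        gcongr
    _ = 2 * t ^ (-3 / 2 : ℝ) := by
        rw [mul_div_assoc, ← rpow_sub ht0]
        norm_num

theorem integrableOn_log_div_mul_add_add (ha : 0 < a) (hb : 0 < b) :
    IntegrableOn (fun t => log t / ((t + a) * (t + b))) (Ioi 0) := by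
  rw [← Ioc_union_Ioi_eq_Ioi zero_le_one]
  exact (integrableOn_Ioc_log_div_mul_add_add ha hb).union
    (integrableOn_Ioi_one_log_div_mul_add_add ha.le hb.le)

theorem integrableOn_and_integral_inv_mul_add_add (ha : 0 < a) (hb : 0 < b) (hab : a ≠ b) :
    IntegrableOn (fun t => ((t + a) * (t + b))⁻¹) (Ioi 0) ∧
      ∫ t in Ioi 0, ((t + a) * (t + b))⁻¹ = (log a - log b) / (a - b) := by
  have hderiv : ∀ x ∈ Ici (0 : ℝ), HasDerivAt (fun t => (log (t + a) - log (t + b)) / (b - a))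
      ((x + a) * (x + b))⁻¹ x := fun x (hx : 0 ≤ x) =>
    hasDerivAt_log_add_sub_log_add_div hab (by positivity) (by positivity)
  have hnonneg : ∀ x ∈ Ioi (0 : ℝ), 0 ≤ ((x + a) * (x + b))⁻¹ := fun x (hx : 0 < x) => by
    positivity
  have hlim := (tendsto_log_add_sub_log_add a b).div_const (b - a)
  refine ⟨integrableOn_Ioi_deriv_of_nonneg' hderiv hnonneg hlim, ?_⟩
  rw [integral_Ioi_of_hasDerivAt_of_nonneg' hderiv hnonneg hlim]
  rw [zero_div, zero_sub, ← div_neg, neg_sub, zero_add, zero_add]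

theorem integral_log_div_mul_add_add_eq_integral_log_mul_sub (ha : 0 < a) (hb : 0 < b) :
    ∫ t in Ioi 0, log t / ((t + a) * (t + b)) =
      ∫ t in Ioi 0, (log (a * b) * ((t + a) * (t + b))⁻¹ - log t / ((t + a) * (t + b))) := by
  rw [← integral_comp_div_Ioi _ (mul_pos ha hb)]
  refine setIntegral_congr_fun measurableSet_Ioi fun t (ht : 0 < t) => ?_
  rw [smul_eq_mul, log_div (mul_pos ha hb).ne' ht.ne']
  field_simp
  ring

end

/-- For `a, b > 0` with `a ≠ b`, `∫₀^∞ (ln t)/((t+a)(t+b)) dt` converges and equals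
`((ln a)² − (ln b)²)/(2(a − b))`. -/
theorem integral_log_div_linear_linear
    (a b : ℝ) (ha : 0 < a) (hb : 0 < b) (hab : a ≠ b) :
    IntegrableOn (fun t : ℝ => Real.log t / ((t + a) * (t + b))) (Set.Ioi 0) ∧
      ∫ t in Set.Ioi (0 : ℝ), Real.log t / ((t + a) * (t + b)) =
        ((Real.log a) ^ 2 - (Real.log b) ^ 2) / (2 * (a - b)) := by
  have hI := integrableOn_log_div_mul_add_add ha hb
  obtain ⟨hJ, hJval⟩ := integrableOn_and_integral_inv_mul_add_add ha hb hab
  refine ⟨hI, ?_⟩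
  have hsymm := integral_log_div_mul_add_add_eq_integral_log_mul_sub ha hb
  rw [integral_sub (hJ.const_mul _) hI, integral_const_mul, hJval, log_mul ha.ne' hb.ne'] at hsymm
  have : a - b ≠ 0 := sub_ne_zero.2 hab
  field_simp at hsymm ⊢
  linear_combination hsymm
end

section
/- For every real x > 0, the function t ↦ ln(t/x)/((1 + xt)(t − x)) on (0, ∞), extended by its limiting value 1/(x(1 + x²)) at t = x (the singularity at t = x is removable), is Lebesgue integrable on (0, ∞) and ∫₀^∞ ln(t/x)/((1 + xt)(t − x)) dt = (2/(1 + x²))·((ln x)² + π²/4). -/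
/-!
Substituting `t = x s` turns the integral into `∫₀^∞ log s / ((1 + a s)(s - 1)) ds` with
`a = x²`. Splitting at `s = 1` and substituting `s = 1/u` on `(1, ∞)` leaves two integrals over
`(0, 1)`, which partial fractions reduce to `2 ∫₀¹ -log u / (1 - u) du = π²/3` (expand
geometrically and use `∫₀¹ -log u · uⁿ du = 1/(n+1)²` and `ζ(2) = π²/6`) plus
`G a = ∫₀¹ -log u (a/(1 + a u) + 1/(u + a)) du = -Li₂(-a) - Li₂(-1/a)`. The dilogarithm
inversion formula `G a = π²/6 + (log a)²/2` follows from `G' a = log a / a` (Fubini) and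
`G 1 = 2 ∫₀¹ -log u / (1 + u) du = π²/6`, an alternating series.
-/

open Real MeasureTheory Set Filter

theorem MeasureTheory.IntegrableOn.mul_continuousOn_of_abs_le {α : Type*} [TopologicalSpace α]
    [MeasurableSpace α] [OpensMeasurableSpace α] {μ : Measure α} {s : Set α} {f g : α → ℝ}
    {C : ℝ} (hs : MeasurableSet s) (hf : IntegrableOn f s μ) (hg : ContinuousOn g s)
    (hC : ∀ x ∈ s, |g x| ≤ C) : IntegrableOn (fun x => f x * g x) s μ :=
  hf.mul_bdd (hg.aestronglyMeasurable hs) ((ae_restrict_iff' hs).2 (Eventually.of_forall hC))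

lemma hasSum_inv_sq_succ : HasSum (fun n : ℕ => 1 / ((n : ℝ) + 1) ^ 2) (π ^ 2 / 6) := by
  have := (hasSum_nat_add_iff (f := fun n : ℕ => 1 / (n : ℝ) ^ 2) 1).2
    (by simpa using hasSum_zeta_two)
  simpa using this

lemma hasSum_alternating_inv_sq_succ :
    HasSum (fun n : ℕ => (-1) ^ n / ((n : ℝ) + 1) ^ 2) (π ^ 2 / 12) := by
  set f : ℕ → ℝ := fun n => 1 / ((n : ℝ) + 1) ^ 2
  have hodd : HasSum (fun k => f (2 * k + 1)) (π ^ 2 / 24) := by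
    have hf : (fun k => f (2 * k + 1)) = fun k => 1 / 4 * f k := by
      funext k; simp only [f]; push_cast; field_simp; ring
    rw [hf, show π ^ 2 / 24 = 1 / 4 * (π ^ 2 / 6) by ring]
    exact hasSum_inv_sq_succ.mul_left _
  obtain ⟨A, heven⟩ : Summable fun k => f (2 * k) :=
    hasSum_inv_sq_succ.summable.comp_injective (mul_right_injective₀ two_ne_zero)
  have hA : A + π ^ 2 / 24 = π ^ 2 / 6 := (heven.even_add_odd hodd).unique hasSum_inv_sq_succ
  have key := HasSum.even_add_odd (f := fun n : ℕ => (-1) ^ n / ((n : ℝ) + 1) ^ 2)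
    (by simpa [f, pow_mul] using heven) (by simpa [f, pow_succ, pow_mul, neg_div] using hodd.neg)
  convert key using 1
  linarith

theorem integral_sub_eq_intervalIntegral_integral_of_hasDerivAt {α E : Type*} [MeasurableSpace α]
    {μ : Measure α} [SFinite μ] [NormedAddCommGroup E] [NormedSpace ℝ E] [CompleteSpace E]
    {F : α → ℝ → E} {f : ℝ → α → E} {a b : ℝ}
    (hF : ∀ᵐ y ∂μ, ∀ s ∈ uIcc a b, HasDerivAt (F y) (f s y) s)
    (hf : Integrable (Function.uncurry f) ((volume.restrict (uIoc a b)).prod μ)) :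
    ∫ y, (F y b - F y a) ∂μ = ∫ s in a..b, ∫ y, f s y ∂μ := by
  rw [intervalIntegral_integral_swap hf]
  refine integral_congr_ae ?_
  filter_upwards [hF, hf.prod_left_ae] with y hFy hfy
  exact (intervalIntegral.integral_eq_sub_of_hasDerivAt hFy (intervalIntegrable_iff.2 hfy)).symm

section inversion

variable {E : Type*} [NormedAddCommGroup E] [NormedSpace ℝ E]

lemma image_inv_Ioo_zero_one : (fun u : ℝ => u⁻¹) '' Ioo 0 1 = Ioi 1 := by
  rw [image_inv_eq_inv, inv_Ioo_0_left one_pos, inv_one]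

lemma integrableOn_Ioi_one_iff_comp_inv (f : ℝ → E) :
    IntegrableOn f (Ioi 1) ↔ IntegrableOn (fun u => (u ^ 2)⁻¹ • f u⁻¹) (Ioo 0 1) := by
  rw [← image_inv_Ioo_zero_one, integrableOn_image_iff_integrableOn_abs_deriv_smul
    measurableSet_Ioo (fun u hu => (hasDerivAt_inv hu.1.ne').hasDerivWithinAt) inv_injective.injOn]
  simp only [abs_neg, abs_inv, abs_sq]

lemma integral_Ioi_one_eq_integral_comp_inv (f : ℝ → E) :
    ∫ s in Ioi 1, f s = ∫ u in Ioo 0 1, (u ^ 2)⁻¹ • f u⁻¹ := by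
  rw [← image_inv_Ioo_zero_one, integral_image_eq_integral_abs_deriv_smul
    measurableSet_Ioo (fun u hu => (hasDerivAt_inv hu.1.ne').hasDerivWithinAt) inv_injective.injOn]
  simp only [abs_neg, abs_inv, abs_sq]

end inversion

namespace LogRatioIntegral

lemma neg_log_nonneg_of_mem_Ioo {u : ℝ} (hu : u ∈ Ioo (0 : ℝ) 1) : 0 ≤ -log u :=
  neg_nonneg.2 (log_nonpos hu.1.le hu.2.le)

lemma integrableOn_neg_log : IntegrableOn (fun u => -log u) (Ioo 0 1) :=
  ((intervalIntegrable_iff_integrableOn_Ioo_of_le zero_le_one).1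
    intervalIntegral.intervalIntegrable_log').neg

lemma neg_log_div_one_sub_le {u : ℝ} (hu : u ∈ Ioo (0 : ℝ) 1) :
    -log u / (1 - u) ≤ 2 * -log u + 2 := by
  obtain ⟨hu0, hu1⟩ := hu
  have hlog : -log u ≤ u⁻¹ - 1 := by
    simpa [log_inv] using log_le_sub_one_of_pos (inv_pos.2 hu0)
  have hmul : u * -log u ≤ 1 - u := by
    have := mul_le_mul_of_nonneg_left hlog hu0.le
    rwa [mul_sub, mul_inv_cancel₀ hu0.ne', mul_one] at this
  rw [div_le_iff₀ (sub_pos.2 hu1)]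
  rcases le_or_gt u (1 / 2) with h | h <;> nlinarith [neg_log_nonneg_of_mem_Ioo ⟨hu0, hu1⟩]

lemma integrableOn_neg_log_div_one_sub : IntegrableOn (fun u => -log u / (1 - u)) (Ioo 0 1) := by
  have hbound : IntegrableOn (fun u => 2 * -log u + 2) (Ioo 0 1) :=
    (integrableOn_neg_log.const_mul 2).add (integrableOn_const (by simp) (by simp))
  refine hbound.mono' (ContinuousOn.aestronglyMeasurable (fun u hu => ?_) measurableSet_Ioo)
    ((ae_restrict_iff' measurableSet_Ioo).2 (Eventually.of_forall fun u hu => ?_))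
  · exact ((continuousAt_log hu.1.ne').neg.div (by fun_prop)
      (sub_pos.2 hu.2).ne').continuousWithinAt
  · rw [norm_of_nonneg (div_nonneg (neg_log_nonneg_of_mem_Ioo hu) (sub_pos.2 hu.2).le)]
    exact neg_log_div_one_sub_le hu

lemma integrableOn_neg_log_mul_pow (n : ℕ) :
    IntegrableOn (fun u => -log u * u ^ n) (Ioo 0 1) :=
  integrableOn_neg_log.mul_continuousOn_of_abs_le measurableSet_Ioo (by fun_prop) fun u hu => by
    rw [abs_of_nonneg (pow_nonneg hu.1.le n)]
    exact pow_le_one₀ hu.1.le hu.2.le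

lemma integral_neg_log_mul_pow (n : ℕ) :
    ∫ u in Ioo (0 : ℝ) 1, -log u * u ^ n = 1 / ((n : ℝ) + 1) ^ 2 := by
  -- `u ^ n * (u * log u)` rather than `u ^ (n + 1) * log u`: the former is continuous at `0`
  set F : ℝ → ℝ := fun u =>
    u ^ (n + 1) / ((n : ℝ) + 1) ^ 2 - u ^ n * (u * log u) / ((n : ℝ) + 1)
  have hcont : Continuous F := by
    have := continuous_mul_log
    fun_prop
  have hderiv : ∀ u ∈ Ioo (0 : ℝ) 1, HasDerivAt F (-log u * u ^ n) u := by
    intro u hu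
    have h := ((hasDerivAt_pow (n + 1) u).div_const (((n : ℝ) + 1) ^ 2)).sub
      (((hasDerivAt_pow n u).mul (hasDerivAt_mul_log hu.1.ne')).div_const ((n : ℝ) + 1))
    refine h.congr_deriv ?_
    rcases n with _ | m
    · simp
    · simp only [Nat.add_sub_cancel]
      push_cast
      field_simp
      ring
  rw [← integral_Ioc_eq_integral_Ioo, ← intervalIntegral.integral_of_le zero_le_one,
    intervalIntegral.integral_eq_sub_of_hasDerivAt_of_le zero_le_one hcont.continuousOn hderiv
      ((intervalIntegrable_iff_integrableOn_Ioo_of_le zero_le_one).2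
        (integrableOn_neg_log_mul_pow n))]
  simp [F]

lemma hasSum_integral_neg_log_div_one_sub_mul {c : ℝ} (hc : |c| ≤ 1) :
    HasSum (fun n : ℕ => c ^ n / ((n : ℝ) + 1) ^ 2)
      (∫ u in Ioo (0 : ℝ) 1, -log u / (1 - c * u)) := by
  have hnorm (n : ℕ) :
      ∫ u in Ioo (0 : ℝ) 1, ‖c ^ n * (-log u * u ^ n)‖ = |c| ^ n / ((n : ℝ) + 1) ^ 2 := by
    rw [div_eq_mul_one_div, ← integral_neg_log_mul_pow, ← integral_const_mul]
    refine setIntegral_congr_fun measurableSet_Ioo fun u hu => ?_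
    rw [norm_mul, norm_pow, norm_of_nonneg
      (mul_nonneg (neg_log_nonneg_of_mem_Ioo hu) (pow_nonneg hu.1.le n)), Real.norm_eq_abs]
  have hsum : ∀ u ∈ Ioo (0 : ℝ) 1,
      ∑' n : ℕ, c ^ n * (-log u * u ^ n) = -log u / (1 - c * u) := by
    intro u hu
    have hcu : |c * u| < 1 := by
      rw [abs_mul, abs_of_pos hu.1]
      nlinarith [abs_nonneg c, hu.1, hu.2]
    simp_rw [show ∀ n : ℕ, c ^ n * (-log u * u ^ n) = -log u * (c * u) ^ n from
      fun n => by ring]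
    rw [tsum_mul_left, tsum_geometric_of_abs_lt_one hcu, div_eq_mul_inv]
  have key := hasSum_integral_of_summable_integral_norm
    (fun n => (integrableOn_neg_log_mul_pow n).const_mul (c ^ n))
    (by
      simp_rw [hnorm]
      exact hasSum_inv_sq_succ.summable.of_nonneg_of_le (fun n => by positivity) fun n =>
        div_le_div_of_nonneg_right (pow_le_one₀ (abs_nonneg c) hc) (by positivity))
  rw [setIntegral_congr_fun measurableSet_Ioo hsum] at key
  simpa only [integral_const_mul, integral_neg_log_mul_pow, mul_one_div] using key

lemma integral_neg_log_div_one_sub : ∫ u in Ioo (0 : ℝ) 1, -log u / (1 - u) = π ^ 2 / 6 := by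
  have h := hasSum_integral_neg_log_div_one_sub_mul (c := 1) (by simp)
  simp only [one_pow, one_mul] at h
  exact h.unique hasSum_inv_sq_succ

lemma integral_neg_log_div_one_add : ∫ u in Ioo (0 : ℝ) 1, -log u / (1 + u) = π ^ 2 / 12 := by
  have h := hasSum_integral_neg_log_div_one_sub_mul (c := -1) (by simp)
  simp only [neg_one_mul, sub_neg_eq_add] at h
  exact h.unique hasSum_alternating_inv_sq_succ

noncomputable def inversionKernel (a u : ℝ) : ℝ := a / (1 + a * u) + 1 / (u + a)

lemma hasDerivAt_inversionKernel {a u : ℝ} (ha : 0 < a) (hu : 0 ≤ u) :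
    HasDerivAt (fun a => inversionKernel a u) (1 / (1 + a * u) ^ 2 - 1 / (u + a) ^ 2) a := by
  have h1 : 1 + a * u ≠ 0 := by positivity
  have h2 : u + a ≠ 0 := by positivity
  have h := ((hasDerivAt_id a).div (((hasDerivAt_id a).mul_const u).const_add 1) h1).add
    ((hasDerivAt_const a 1).div ((hasDerivAt_id a).const_add u) h2)
  refine HasDerivAt.congr_deriv (f := fun a => a / (1 + a * u) + 1 / (u + a)) h ?_
  simp only [id]
  field_simp
  ring

lemma abs_inv_sq_sub_inv_sq_le {a u : ℝ} (ha : 0 < a) (hu : 0 ≤ u) :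
    |1 / (1 + a * u) ^ 2 - 1 / (u + a) ^ 2| ≤ 1 + 1 / a ^ 2 := by
  have h1 : 1 / (1 + a * u) ^ 2 ≤ 1 := by
    rw [div_le_one (by positivity)]; nlinarith [mul_nonneg ha.le hu]
  have h2 : 1 / (u + a) ^ 2 ≤ 1 / a ^ 2 :=
    one_div_le_one_div_of_le (by positivity) (by nlinarith)
  have h1' : 0 ≤ 1 / (1 + a * u) ^ 2 := by positivity
  have h2' : 0 ≤ 1 / (u + a) ^ 2 := by positivity
  rw [abs_le]
  constructor <;> nlinarith [one_div_pos.2 (pow_pos ha 2)]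

/- The primitive is `-log u * K u + ∫ K u / u du`, by parts, where
`K u = u (a² - 1)/(a (1 + a u)(u + a))` is the primitive of the kernel vanishing at `0` and
`K u / u = (a/(1 + a u) - 1/(u + a))/a`. -/
lemma hasDerivAt_primitive_neg_log_mul_inv_sq_sub_inv_sq {a u : ℝ} (ha : 0 < a) (hu : 0 < u) :
    HasDerivAt (fun u => u * log u * ((1 - a ^ 2) / (a * (1 + a * u) * (u + a)))
        + (log (1 + a * u) - log (u + a)) / a)
      (-log u * (1 / (1 + a * u) ^ 2 - 1 / (u + a) ^ 2)) u := by
  have h1 : 1 + a * u ≠ 0 := by positivity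
  have h2 : u + a ≠ 0 := by positivity
  have hD : a * (1 + a * u) * (u + a) ≠ 0 := by positivity
  have hlin : HasDerivAt (fun u => 1 + a * u) a u := by
    simpa using ((hasDerivAt_id u).const_mul a).const_add 1
  have hden := (hlin.const_mul a).mul ((hasDerivAt_id u).add_const a)
  have h := ((hasDerivAt_mul_log hu.ne').mul ((hasDerivAt_const u (1 - a ^ 2)).div hden hD)).add
    (((hlin.log h1).sub (((hasDerivAt_id u).add_const a).log h2)).div_const a)
  refine h.congr_deriv ?_
  simp only [Pi.div_apply, Pi.mul_apply, id]
  field_simp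
  ring

lemma integral_neg_log_mul_inv_sq_sub_inv_sq {a : ℝ} (ha : 0 < a) :
    ∫ u in Ioo (0 : ℝ) 1, -log u * (1 / (1 + a * u) ^ 2 - 1 / (u + a) ^ 2) = log a / a := by
  have hcont : ContinuousOn (fun u => u * log u * ((1 - a ^ 2) / (a * (1 + a * u) * (u + a)))
      + (log (1 + a * u) - log (u + a)) / a) (Icc 0 1) := by
    have h1 : ∀ u ∈ Icc (0 : ℝ) 1, 1 + a * u ≠ 0 := fun u hu => by have := hu.1; positivity
    have h2 : ∀ u ∈ Icc (0 : ℝ) 1, u + a ≠ 0 := fun u hu => by have := hu.1; positivity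
    have h3 : ∀ u ∈ Icc (0 : ℝ) 1, a * (1 + a * u) * (u + a) ≠ 0 := fun u hu =>
      mul_ne_zero (mul_ne_zero ha.ne' (h1 u hu)) (h2 u hu)
    exact (continuous_mul_log.continuousOn.mul (continuousOn_const.div (by fun_prop) h3)).add
      (((continuousOn_const.add (continuousOn_const.mul continuousOn_id)).log h1).sub
        ((continuousOn_id.add continuousOn_const).log h2) |>.div_const a)
  have hint : IntervalIntegrable (fun u => -log u * (1 / (1 + a * u) ^ 2 - 1 / (u + a) ^ 2))
      volume 0 1 :=
    (intervalIntegrable_iff_integrableOn_Ioo_of_le zero_le_one).2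
      (integrableOn_neg_log.mul_continuousOn_of_abs_le measurableSet_Ioo
        (fun u hu => by
          have h1 : (1 + a * u) ^ 2 ≠ 0 := by have := hu.1; positivity
          have h2 : (u + a) ^ 2 ≠ 0 := by have := hu.1; positivity
          fun_prop (disch := assumption))
        fun u hu => abs_inv_sq_sub_inv_sq_le ha hu.1.le)
  rw [← integral_Ioc_eq_integral_Ioo, ← intervalIntegral.integral_of_le zero_le_one,
    intervalIntegral.integral_eq_sub_of_hasDerivAt_of_le zero_le_one hcont
      (fun u hu => hasDerivAt_primitive_neg_log_mul_inv_sq_sub_inv_sq ha hu.1) hint]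
  simp only [log_one, log_zero, mul_zero, mul_one, zero_mul, sub_self, zero_div, add_zero,
    zero_add, zero_sub]
  field_simp

lemma integrable_prod_neg_log_mul_inv_sq_sub_inv_sq {a b : ℝ} (ha : 0 < a) (hb : 0 < b) :
    Integrable (Function.uncurry fun s u => -log u * (1 / (1 + s * u) ^ 2 - 1 / (u + s) ^ 2))
      ((volume.restrict (uIoc a b)).prod (volume.restrict (Ioo 0 1))) := by
  have hpos : ∀ s ∈ uIcc a b, 0 < s := fun s hs => (lt_min ha hb).trans_le hs.1
  have hbound : Integrable (fun p : ℝ × ℝ => (1 + 1 / p.1 ^ 2) * -log p.2)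
      ((volume.restrict (uIoc a b)).prod (volume.restrict (Ioo 0 1))) := by
    have hcoeff : IntegrableOn (fun s : ℝ => 1 + 1 / s ^ 2) (uIcc a b) :=
      ContinuousOn.integrableOn_uIcc fun s hs => by
        have := (hpos s hs).ne'
        exact ContinuousAt.continuousWithinAt (by fun_prop (disch := positivity))
    exact (hcoeff.mono_set uIoc_subset_uIcc).mul_prod integrableOn_neg_log
  rw [Measure.prod_restrict] at hbound ⊢
  refine hbound.mono' (ContinuousOn.aestronglyMeasurable (fun p hp => ?_)
      (measurableSet_uIoc.prod measurableSet_Ioo))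
    ((ae_restrict_iff' (measurableSet_uIoc.prod measurableSet_Ioo)).2
      (Eventually.of_forall fun p hp => ?_))
  · obtain ⟨hs, hu⟩ := hp
    have hs0 := hpos p.1 (uIoc_subset_uIcc hs)
    have h1 : (1 + p.1 * p.2) ^ 2 ≠ 0 := by have := hu.1; positivity
    have h2 : (p.2 + p.1) ^ 2 ≠ 0 := by have := hu.1; positivity
    have hlog : ContinuousAt (fun p : ℝ × ℝ => log p.2) p :=
      (continuousAt_log hu.1.ne').comp continuousAt_snd
    exact (hlog.neg.mul (by fun_prop (disch := assumption))).continuousWithinAt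
  · obtain ⟨hs, hu⟩ := hp
    change ‖-log p.2 * (1 / (1 + p.1 * p.2) ^ 2 - 1 / (p.2 + p.1) ^ 2)‖ ≤ _
    rw [norm_mul, Real.norm_eq_abs, Real.norm_eq_abs,
      abs_of_nonneg (neg_log_nonneg_of_mem_Ioo hu), mul_comm]
    exact mul_le_mul_of_nonneg_right
      (abs_inv_sq_sub_inv_sq_le (hpos p.1 (uIoc_subset_uIcc hs)) hu.1.le)
      (neg_log_nonneg_of_mem_Ioo hu)

lemma integrableOn_neg_log_mul_inversionKernel {a : ℝ} (ha : 0 < a) :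
    IntegrableOn (fun u => -log u * inversionKernel a u) (Ioo 0 1) := by
  refine integrableOn_neg_log.mul_continuousOn_of_abs_le (C := a + 1 / a) measurableSet_Ioo
    (fun u hu => ?_) fun u hu => ?_
  · have h1 : 1 + a * u ≠ 0 := by have := hu.1; positivity
    have h2 : u + a ≠ 0 := by have := hu.1; positivity
    unfold inversionKernel
    fun_prop (disch := assumption)
  · have hu0 := hu.1
    have h1 : a / (1 + a * u) ≤ a := div_le_self ha.le (by nlinarith)
    have h2 : 1 / (u + a) ≤ 1 / a := one_div_le_one_div_of_le ha (by linarith)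
    rw [inversionKernel, abs_of_nonneg (by positivity)]
    linarith

lemma integral_neg_log_mul_inversionKernel {a : ℝ} (ha : 0 < a) :
    ∫ u in Ioo (0 : ℝ) 1, -log u * inversionKernel a u = π ^ 2 / 6 + log a ^ 2 / 2 := by
  have hone : ∫ u in Ioo (0 : ℝ) 1, -log u * inversionKernel 1 u = π ^ 2 / 6 := by
    have h : ∀ u, -log u * inversionKernel 1 u = 2 * (-log u / (1 + u)) := fun u => by
      rw [inversionKernel, one_mul, add_comm u 1]; ring
    simp only [h, integral_const_mul, integral_neg_log_div_one_add]
    ring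
  have hderiv : ∀ᵐ u ∂volume.restrict (Ioo 0 1), ∀ s ∈ uIcc 1 a,
      HasDerivAt (fun s => -log u * inversionKernel s u)
        (-log u * (1 / (1 + s * u) ^ 2 - 1 / (u + s) ^ 2)) s :=
    (ae_restrict_iff' measurableSet_Ioo).2 <| Eventually.of_forall fun u hu s hs =>
      (hasDerivAt_inversionKernel ((lt_min one_pos ha).trans_le hs.1) hu.1.le).const_mul _
  have hfubini := integral_sub_eq_intervalIntegral_integral_of_hasDerivAt hderiv
    (integrable_prod_neg_log_mul_inv_sq_sub_inv_sq one_pos ha)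
  have hlog : ∫ s in (1 : ℝ)..a, log s / s = log a ^ 2 / 2 := by
    have hpos : ∀ s ∈ uIcc 1 a, 0 < s := fun s hs => (lt_min one_pos ha).trans_le hs.1
    rw [intervalIntegral.integral_eq_sub_of_hasDerivAt (f := fun s => log s ^ 2 / 2)
      (fun s hs => ?_) (ContinuousOn.intervalIntegrable fun s hs => ?_)]
    · simp
    · refine (((hasDerivAt_log (hpos s hs).ne').pow 2).div_const 2).congr_deriv ?_
      norm_num
      ring
    · exact ((continuousAt_log (hpos s hs).ne').div continuousAt_id
        (hpos s hs).ne').continuousWithinAt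
  rw [integral_sub (integrableOn_neg_log_mul_inversionKernel ha)
      (integrableOn_neg_log_mul_inversionKernel one_pos), hone,
    intervalIntegral.integral_congr fun s hs =>
      integral_neg_log_mul_inv_sq_sub_inv_sq ((lt_min one_pos ha).trans_le hs.1), hlog]
    at hfubini
  linarith

lemma integrableOn_neg_log_div_mul_one_sub {d : ℝ → ℝ} {m : ℝ} (hm : 0 < m)
    (hd : ContinuousOn d (Ioo 0 1)) (hdm : ∀ u ∈ Ioo (0 : ℝ) 1, m ≤ d u) :
    IntegrableOn (fun u => -log u / (d u * (1 - u))) (Ioo 0 1) := by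
  have hd0 : ∀ u ∈ Ioo (0 : ℝ) 1, 0 < d u := fun u hu => hm.trans_le (hdm u hu)
  refine (integrableOn_neg_log_div_one_sub.mul_continuousOn_of_abs_le (C := m⁻¹)
    measurableSet_Ioo (hd.inv₀ fun u hu => (hd0 u hu).ne') fun u hu => ?_).congr_fun
    (fun u _ => by
      simp only [Pi.inv_apply]; rw [mul_comm (d u), ← div_div]; ring)
    measurableSet_Ioo
  rw [Pi.inv_apply, abs_of_pos (inv_pos.2 (hd0 u hu))]
  exact inv_anti₀ hm (hdm u hu)

lemma integral_neg_log_div_add_integral_neg_log_div {a : ℝ} (ha : 0 < a) :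
    (∫ u in Ioo (0 : ℝ) 1, -log u / ((1 + a * u) * (1 - u)))
      + ∫ u in Ioo (0 : ℝ) 1, -log u / ((u + a) * (1 - u))
      = (π ^ 2 / 2 + log a ^ 2 / 2) / (1 + a) := by
  have hfrac : ∀ u ∈ Ioo (0 : ℝ) 1,
      -log u / ((1 + a * u) * (1 - u)) + -log u / ((u + a) * (1 - u))
        = (1 + a)⁻¹ * (2 * (-log u / (1 - u)) + -log u * inversionKernel a u) := by
    intro u hu
    have h1 : 1 + a * u ≠ 0 := by have := hu.1; positivity
    have h2 : u + a ≠ 0 := by have := hu.1; positivity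
    have h3 : 1 - u ≠ 0 := (sub_pos.2 hu.2).ne'
    have h4 : 1 + a ≠ 0 := by positivity
    rw [inversionKernel]
    field_simp
    ring
  rw [← integral_add
      (integrableOn_neg_log_div_mul_one_sub one_pos (by fun_prop)
        fun u hu => by nlinarith [mul_pos ha hu.1])
      (integrableOn_neg_log_div_mul_one_sub ha (by fun_prop) fun u hu => by linarith [hu.1]),
    setIntegral_congr_fun measurableSet_Ioo hfrac, integral_const_mul,
    integral_add (integrableOn_neg_log_div_one_sub.const_mul 2)
      (integrableOn_neg_log_mul_inversionKernel ha),
    integral_const_mul, integral_neg_log_div_one_sub, integral_neg_log_mul_inversionKernel ha]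
  field_simp
  ring

lemma log_div_mul_sub_one_eq (a u : ℝ) :
    log u / ((1 + a * u) * (u - 1)) = -log u / ((1 + a * u) * (1 - u)) := by
  rw [← neg_sub u 1, mul_neg, neg_div_neg_eq]

lemma eqOn_comp_inv_log_div_mul_sub_one (a : ℝ) :
    EqOn (fun u : ℝ => (u ^ 2)⁻¹ • (log u⁻¹ / ((1 + a * u⁻¹) * (u⁻¹ - 1))))
      (fun u => -log u / ((u + a) * (1 - u))) (Ioo 0 1) := by
  intro u hu
  have h0 := hu.1.ne'
  have h1 : 1 - u ≠ 0 := (sub_pos.2 hu.2).ne'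
  simp only [smul_eq_mul, log_inv]
  field_simp

theorem integrableOn_log_div_mul_sub_one {a : ℝ} (ha : 0 < a) :
    IntegrableOn (fun s => log s / ((1 + a * s) * (s - 1))) (Ioi 0) := by
  rw [← Ioc_union_Ioi_eq_Ioi zero_le_one]
  refine IntegrableOn.union ?_ ?_
  · rw [integrableOn_Ioc_iff_integrableOn_Ioo]
    simp only [log_div_mul_sub_one_eq]
    exact integrableOn_neg_log_div_mul_one_sub one_pos (by fun_prop)
      fun u hu => by nlinarith [mul_pos ha hu.1]
  · rw [integrableOn_Ioi_one_iff_comp_inv,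
      integrableOn_congr_fun (eqOn_comp_inv_log_div_mul_sub_one a) measurableSet_Ioo]
    exact integrableOn_neg_log_div_mul_one_sub ha (by fun_prop) fun u hu => by linarith [hu.1]

theorem integral_log_div_mul_sub_one {a : ℝ} (ha : 0 < a) :
    ∫ s in Ioi 0, log s / ((1 + a * s) * (s - 1)) = (π ^ 2 / 2 + log a ^ 2 / 2) / (1 + a) := by
  have hint := integrableOn_log_div_mul_sub_one ha
  rw [← Ioc_union_Ioi_eq_Ioi zero_le_one] at hint ⊢
  rw [setIntegral_union (Ioc_disjoint_Ioi le_rfl) measurableSet_Ioi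
      (hint.mono_set subset_union_left) (hint.mono_set subset_union_right),
    integral_Ioc_eq_integral_Ioo, integral_Ioi_one_eq_integral_comp_inv,
    setIntegral_congr_fun measurableSet_Ioo (eqOn_comp_inv_log_div_mul_sub_one a)]
  simp only [log_div_mul_sub_one_eq]
  exact integral_neg_log_div_add_integral_neg_log_div ha

lemma log_div_mul_sub_comp_mul {x : ℝ} (hx : x ≠ 0) (s : ℝ) :
    log (x * s / x) / ((1 + x * (x * s)) * (x * s - x))
      = x⁻¹ * (log s / ((1 + x ^ 2 * s) * (s - 1))) := by
  rw [mul_div_cancel_left₀ s hx,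
    show (1 + x * (x * s)) * (x * s - x) = x * ((1 + x ^ 2 * s) * (s - 1)) by ring, ← div_div]
  ring

end LogRatioIntegral

open LogRatioIntegral in
/-- For `x > 0`, the function `t ↦ ln(t/x)/((1 + xt)(t − x))` on `(0, ∞)`, extended by its
limiting value `1/(x(1 + x²))` at the removable singularity `t = x`, is Lebesgue
integrable on `(0, ∞)`, and its integral equals `(2/(1 + x²))((ln x)² + π²/4)`. -/
theorem integral_log_ratio_removable_singularity
    (x : ℝ) (hx : 0 < x) :
    IntegrableOn
        (fun t : ℝ => if t = x then 1 / (x * (1 + x ^ 2))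
          else Real.log (t / x) / ((1 + x * t) * (t - x))) (Set.Ioi 0) ∧
      ∫ t in Set.Ioi (0 : ℝ),
          (if t = x then 1 / (x * (1 + x ^ 2))
            else Real.log (t / x) / ((1 + x * t) * (t - x))) =
        (2 / (1 + x ^ 2)) * ((Real.log x) ^ 2 + Real.pi ^ 2 / 4) := by
  set g : ℝ → ℝ := fun t => log (t / x) / ((1 + x * t) * (t - x))
  have hae : (fun t => if t = x then 1 / (x * (1 + x ^ 2)) else g t)
      =ᵐ[volume.restrict (Ioi 0)] g := by
    filter_upwards [ae_restrict_of_ae (volume.ae_ne x)] with t ht using if_neg ht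
  have hscale : (fun s => g (x * s)) = fun s => x⁻¹ * (log s / ((1 + x ^ 2 * s) * (s - 1))) :=
    funext (log_div_mul_sub_comp_mul hx.ne')
  have hint : IntegrableOn g (Ioi 0) := by
    have h := (integrableOn_Ioi_comp_mul_left_iff g 0 hx).1
      (hscale ▸ (integrableOn_log_div_mul_sub_one (pow_pos hx 2)).const_mul x⁻¹)
    rwa [mul_zero] at h
  have hval : ∫ t in Ioi 0, g t = ∫ s in Ioi 0, log s / ((1 + x ^ 2 * s) * (s - 1)) := by
    have h := integral_comp_mul_left_Ioi' g 0 hx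
    rw [mul_zero] at h
    rw [← h, hscale, integral_const_mul, smul_eq_mul, ← mul_assoc, mul_inv_cancel₀ hx.ne',
      one_mul]
  refine ⟨hint.congr_fun_ae hae.symm, ?_⟩
  rw [integral_congr_ae hae, hval, integral_log_div_mul_sub_one (pow_pos hx 2), log_pow]
  field_simp
  ring
end

section
/- There exists α₀ > 0 such that for every α ∈ (0, α₀) the triple integral I(α) = ∭_{(0,∞)³} x^{α−1} y^{α−1} z^{α−1} / ((1 + xy)(1 + xz)(1 + yz)) dx dy dz is finite, and the limit Q₀ = lim_{α→0⁺} α³ I(α) exists, is finite and is strictly positive. -/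
/-!
The substitution `(u, v, w) = (xy, xz, yz)` maps the positive octant bijectively onto itself with
Jacobian `2xyz`, and turns `I(α)` into `J(α/2)³ / 2`, where `J(s) = ∫₀^∞ t^(s-1) / (1 + t) dt`.
Comparing the integrand with `t^(s-1) - t^s` and `t^(s-1)` on `(0, 1]` and with `t^(s-2)` on
`(1, ∞)` gives `1 / (1 + s) ≤ s J(s) ≤ 1 / (1 - s)`, so `s J(s) → 1` and `α³ I(α) → 4`.
-/

open Real MeasureTheory Filter

/-- The triple-integral integrand
`F_α(x,y,z) = x^{α−1} y^{α−1} z^{α−1} / ((1+xy)(1+xz)(1+yz))`. -/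
noncomputable def tripleF (α : ℝ) (p : ℝ × ℝ × ℝ) : ℝ :=
  p.1 ^ (α - 1) * p.2.1 ^ (α - 1) * p.2.2 ^ (α - 1) /
    ((1 + p.1 * p.2.1) * (1 + p.1 * p.2.2) * (1 + p.2.1 * p.2.2))

/-- The triple integral `I(α) = ∭_{(0,∞)³} F_α`. -/
noncomputable def tripleI (α : ℝ) : ℝ :=
  ∫ p in Set.Ioi (0 : ℝ) ×ˢ Set.Ioi (0 : ℝ) ×ˢ Set.Ioi (0 : ℝ), tripleF α p

open Set Topology

lemma integrableOn_Ioc_zero_one_rpow {r : ℝ} (hr : -1 < r) :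
    IntegrableOn (fun t : ℝ => t ^ r) (Ioc 0 1) :=
  (intervalIntegral.intervalIntegrable_rpow' hr (a := 0) (b := 1)).1

lemma continuousOn_rpow_div_one_add (r : ℝ) :
    ContinuousOn (fun t : ℝ => t ^ r / (1 + t)) (Ioi 0) :=
  (continuousOn_id.rpow_const fun t ht => Or.inl (ne_of_gt ht)).div
    (continuousOn_const.add continuousOn_id) fun t (ht : 0 < t) => by positivity

lemma integrableOn_Ioc_rpow_div_one_add {r : ℝ} (hr : -1 < r) :
    IntegrableOn (fun t : ℝ => t ^ r / (1 + t)) (Ioc 0 1) := by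
  refine (integrableOn_Ioc_zero_one_rpow hr).mono'
    (((continuousOn_rpow_div_one_add r).mono Ioc_subset_Ioi_self)
      |>.aestronglyMeasurable measurableSet_Ioc) ?_
  filter_upwards [ae_restrict_mem measurableSet_Ioc] with t ht
  have ht0 := ht.1
  rw [norm_of_nonneg (by positivity)]
  exact div_le_self (by positivity) (by linarith)

lemma integrableOn_Ioi_one_rpow_div_one_add {r : ℝ} (hr : r < 0) :
    IntegrableOn (fun t : ℝ => t ^ r / (1 + t)) (Ioi 1) := by
  refine (integrableOn_Ioi_rpow_of_lt (by linarith : r - 1 < -1) one_pos).mono'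
    (((continuousOn_rpow_div_one_add r).mono (Ioi_subset_Ioi zero_le_one))
      |>.aestronglyMeasurable measurableSet_Ioi) ?_
  filter_upwards [ae_restrict_mem measurableSet_Ioi] with t (ht : 1 < t)
  have ht0 : 0 < t := by linarith
  rw [norm_of_nonneg (by positivity), rpow_sub_one ht0.ne']
  exact div_le_div_of_nonneg_left (by positivity) ht0 (by linarith)

lemma integrableOn_rpow_div_one_add {s : ℝ} (hs0 : 0 < s) (hs1 : s < 1) :
    IntegrableOn (fun t : ℝ => t ^ (s - 1) / (1 + t)) (Ioi 0) := by
  rw [← Ioc_union_Ioi_eq_Ioi zero_le_one]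
  exact (integrableOn_Ioc_rpow_div_one_add (by linarith)).union
    (integrableOn_Ioi_one_rpow_div_one_add (by linarith))

lemma integral_Ioc_zero_one_rpow {r : ℝ} (hr : -1 < r) :
    ∫ t in Ioc (0 : ℝ) 1, t ^ r = 1 / (r + 1) := by
  rw [← intervalIntegral.integral_of_le zero_le_one, integral_rpow (Or.inl hr), one_rpow,
    zero_rpow (by linarith)]
  ring

lemma one_div_sub_one_div_add_one_le_integral_rpow_div_one_add {s : ℝ} (hs0 : 0 < s)
    (hs1 : s < 1) : 1 / s - 1 / (s + 1) ≤ ∫ t in Ioi 0, t ^ (s - 1) / (1 + t) := by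
  have hint := integrableOn_rpow_div_one_add hs0 hs1
  calc 1 / s - 1 / (s + 1) = ∫ t in Ioc (0 : ℝ) 1, (t ^ (s - 1) - t ^ s) := by
        rw [integral_sub (integrableOn_Ioc_zero_one_rpow (by linarith))
          (integrableOn_Ioc_zero_one_rpow (by linarith)), integral_Ioc_zero_one_rpow (by linarith),
          integral_Ioc_zero_one_rpow (by linarith), sub_add_cancel]
    _ ≤ ∫ t in Ioc (0 : ℝ) 1, t ^ (s - 1) / (1 + t) := by
        refine setIntegral_mono_on ((integrableOn_Ioc_zero_one_rpow (by linarith)).sub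
          (integrableOn_Ioc_zero_one_rpow (by linarith))) (hint.mono_set Ioc_subset_Ioi_self)
          measurableSet_Ioc fun t ⟨ht0, _⟩ => ?_
        -- `1 / (1 + t) ≥ 1 - t`
        have hts : t ^ s = t ^ (s - 1) * t := by rw [← rpow_add_one ht0.ne', sub_add_cancel]
        have hpos : 0 ≤ t ^ (s - 1) := by positivity
        rw [hts, le_div_iff₀ (by linarith)]
        nlinarith [mul_nonneg hpos (sq_nonneg t)]
    _ ≤ ∫ t in Ioi 0, t ^ (s - 1) / (1 + t) :=
        setIntegral_mono_set hint ((ae_restrict_mem measurableSet_Ioi).mono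
          fun t (ht : 0 < t) => by positivity) Ioc_subset_Ioi_self.eventuallyLE

lemma integral_rpow_div_one_add_le {s : ℝ} (hs0 : 0 < s) (hs1 : s < 1) :
    ∫ t in Ioi 0, t ^ (s - 1) / (1 + t) ≤ 1 / s + 1 / (1 - s) := by
  rw [← Ioc_union_Ioi_eq_Ioi zero_le_one, setIntegral_union (Ioc_disjoint_Ioi le_rfl)
    measurableSet_Ioi (integrableOn_Ioc_rpow_div_one_add (by linarith))
    (integrableOn_Ioi_one_rpow_div_one_add (by linarith))]
  gcongr
  · calc ∫ t in Ioc (0 : ℝ) 1, t ^ (s - 1) / (1 + t) ≤ ∫ t in Ioc (0 : ℝ) 1, t ^ (s - 1) :=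
          setIntegral_mono_on (integrableOn_Ioc_rpow_div_one_add (by linarith))
            (integrableOn_Ioc_zero_one_rpow (by linarith)) measurableSet_Ioc
            fun t ⟨ht0, _⟩ => div_le_self (by positivity) (by linarith)
      _ = 1 / s := by rw [integral_Ioc_zero_one_rpow (by linarith), sub_add_cancel]
  · calc ∫ t in Ioi (1 : ℝ), t ^ (s - 1) / (1 + t) ≤ ∫ t in Ioi (1 : ℝ), t ^ (s - 2) :=
          setIntegral_mono_on (integrableOn_Ioi_one_rpow_div_one_add (by linarith))
            (integrableOn_Ioi_rpow_of_lt (by linarith) one_pos) measurableSet_Ioi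
            fun t (ht : 1 < t) => by
              have ht0 : 0 < t := by linarith
              rw [show s - 2 = s - 1 - 1 by ring, rpow_sub_one ht0.ne' (s - 1)]
              exact div_le_div_of_nonneg_left (by positivity) ht0 (by linarith)
      _ = 1 / (1 - s) := by
          rw [integral_Ioi_rpow_of_lt (by linarith) one_pos, one_rpow,
            show s - 2 + 1 = -(1 - s) by ring, div_neg, neg_div, neg_neg]

lemma tendsto_mul_integral_rpow_div_one_add :
    Tendsto (fun s : ℝ => s * ∫ t in Ioi (0 : ℝ), t ^ (s - 1) / (1 + t)) (𝓝[>] 0) (𝓝 1) := by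
  have hlow : Tendsto (fun s : ℝ => 1 / (s + 1)) (𝓝[>] 0) (𝓝 1) := by
    simpa using ((by fun_prop (disch := norm_num) :
      ContinuousAt (fun s : ℝ => 1 / (s + 1)) 0).tendsto).mono_left nhdsWithin_le_nhds
  have hup : Tendsto (fun s : ℝ => 1 / (1 - s)) (𝓝[>] 0) (𝓝 1) := by
    simpa using ((by fun_prop (disch := norm_num) :
      ContinuousAt (fun s : ℝ => 1 / (1 - s)) 0).tendsto).mono_left nhdsWithin_le_nhds
  have hs : ∀ᶠ s in 𝓝[>] (0 : ℝ), s ∈ Ioo 0 1 := Ioo_mem_nhdsGT one_pos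
  refine tendsto_of_tendsto_of_tendsto_of_le_of_le' hlow hup ?_ ?_
  · filter_upwards [hs] with s ⟨hs0, hs1⟩
    calc 1 / (s + 1) = s * (1 / s - 1 / (s + 1)) := by field_simp; ring
      _ ≤ _ := mul_le_mul_of_nonneg_left
          (one_div_sub_one_div_add_one_le_integral_rpow_div_one_add hs0 hs1) hs0.le
  · filter_upwards [hs] with s ⟨hs0, hs1⟩
    calc _ ≤ s * (1 / s + 1 / (1 - s)) :=
          mul_le_mul_of_nonneg_left (integral_rpow_div_one_add_le hs0 hs1) hs0.le
      _ = 1 / (1 - s) := by field_simp; ring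

def octant : Set (ℝ × ℝ × ℝ) := Ioi 0 ×ˢ Ioi 0 ×ˢ Ioi 0

def pairwiseProd (p : ℝ × ℝ × ℝ) : ℝ × ℝ × ℝ := (p.1 * p.2.1, p.1 * p.2.2, p.2.1 * p.2.2)

noncomputable def projX : (ℝ × ℝ × ℝ) →L[ℝ] ℝ := ContinuousLinearMap.fst ℝ ℝ (ℝ × ℝ)

noncomputable def projY : (ℝ × ℝ × ℝ) →L[ℝ] ℝ :=
  (ContinuousLinearMap.fst ℝ ℝ ℝ).comp (ContinuousLinearMap.snd ℝ ℝ (ℝ × ℝ))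

noncomputable def projZ : (ℝ × ℝ × ℝ) →L[ℝ] ℝ :=
  (ContinuousLinearMap.snd ℝ ℝ ℝ).comp (ContinuousLinearMap.snd ℝ ℝ (ℝ × ℝ))

noncomputable def pairwiseProdFDeriv (p : ℝ × ℝ × ℝ) : (ℝ × ℝ × ℝ) →L[ℝ] ℝ × ℝ × ℝ :=
  (p.1 • projY + p.2.1 • projX).prod
    ((p.1 • projZ + p.2.2 • projX).prod (p.2.1 • projZ + p.2.2 • projY))

theorem hasFDerivAt_pairwiseProd (p : ℝ × ℝ × ℝ) :
    HasFDerivAt pairwiseProd (pairwiseProdFDeriv p) p := by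
  have hx : HasFDerivAt (fun q : ℝ × ℝ × ℝ => q.1) projX p := hasFDerivAt_fst
  have hy : HasFDerivAt (fun q : ℝ × ℝ × ℝ => q.2.1) projY p :=
    hasFDerivAt_fst.comp p hasFDerivAt_snd
  have hz : HasFDerivAt (fun q : ℝ × ℝ × ℝ => q.2.2) projZ p :=
    hasFDerivAt_snd.comp p hasFDerivAt_snd
  exact (hx.mul hy).prodMk ((hx.mul hz).prodMk (hy.mul hz))

noncomputable def prodEquivFinThree : (ℝ × ℝ × ℝ) ≃ₗ[ℝ] (Fin 3 → ℝ) where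
  toFun p := ![p.1, p.2.1, p.2.2]
  invFun v := (v 0, v 1, v 2)
  map_add' p q := by funext i; fin_cases i <;> simp
  map_smul' c p := by funext i; fin_cases i <;> simp
  left_inv p := by simp
  right_inv v := by funext i; fin_cases i <;> simp

theorem det_pairwiseProdFDeriv (p : ℝ × ℝ × ℝ) :
    (pairwiseProdFDeriv p).det = -2 * (p.1 * p.2.1 * p.2.2) := by
  rw [ContinuousLinearMap.det, ← LinearMap.det_conj _ prodEquivFinThree,
    ← LinearMap.det_toMatrix', Matrix.det_fin_three]
  simp [LinearMap.toMatrix'_apply, prodEquivFinThree, pairwiseProdFDeriv, projX, projY, projZ]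
  ring

theorem injOn_pairwiseProd : InjOn pairwiseProd octant := by
  rintro ⟨x, y, z⟩ ⟨hx, hy, hz⟩ ⟨x', y', z'⟩ ⟨hx', hy', hz'⟩ h
  simp only [pairwiseProd, Prod.mk.injEq] at h
  obtain ⟨hxy, hxz, hyz⟩ := h
  simp only [mem_Ioi] at hx hy hz hx' hy' hz'
  have hsq : x ^ 2 = x' ^ 2 := by
    refine mul_right_cancel₀ (mul_pos hy hz).ne' ?_
    calc x ^ 2 * (y * z) = (x * y) * (x * z) := by ring
      _ = x' ^ 2 * (y' * z') := by rw [hxy, hxz]; ring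
      _ = x' ^ 2 * (y * z) := by rw [hyz]
  obtain rfl : x = x' := (pow_left_inj₀ hx.le hx'.le two_ne_zero).1 hsq
  rw [mul_left_cancel₀ hx.ne' hxy, mul_left_cancel₀ hx.ne' hxz]

theorem pairwiseProd_image_octant : pairwiseProd '' octant = octant := by
  refine (image_subset_iff.2 ?_).antisymm ?_
  · rintro ⟨x, y, z⟩ ⟨hx, hy, hz⟩
    exact show 0 < x * y ∧ 0 < x * z ∧ 0 < y * z from
      ⟨mul_pos hx hy, mul_pos hx hz, mul_pos hy hz⟩
  · rintro ⟨u, v, w⟩ ⟨hu, hv, hw⟩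
    simp only [mem_Ioi] at hu hv hw
    refine ⟨(√(u * v / w), √(u * w / v), √(v * w / u)), ⟨?_, ?_, ?_⟩, ?_⟩
    · exact sqrt_pos.2 (by positivity)
    · exact sqrt_pos.2 (by positivity)
    · exact sqrt_pos.2 (by positivity)
    simp only [pairwiseProd, Prod.mk.injEq]
    refine ⟨?_, ?_, ?_⟩ <;> rw [← sqrt_mul (by positivity)]
    · rw [show u * v / w * (u * w / v) = u ^ 2 by field_simp, sqrt_sq hu.le]
    · rw [show u * v / w * (v * w / u) = v ^ 2 by field_simp, sqrt_sq hv.le]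
    · rw [show u * w / v * (v * w / u) = w ^ 2 by field_simp, sqrt_sq hw.le]

theorem abs_det_pairwiseProdFDeriv {p : ℝ × ℝ × ℝ} (hp : p ∈ octant) :
    |(pairwiseProdFDeriv p).det| = 2 * (p.1 * p.2.1 * p.2.2) := by
  obtain ⟨hx, hy, hz⟩ := hp
  rw [det_pairwiseProdFDeriv, neg_mul, abs_neg, abs_of_pos]
  simp only [mem_Ioi] at hx hy hz
  positivity

theorem measurableSet_octant : MeasurableSet octant :=
  measurableSet_Ioi.prod (measurableSet_Ioi.prod measurableSet_Ioi)

instance : Measure.IsAddHaarMeasure (volume : Measure (ℝ × ℝ × ℝ)) :=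
  Measure.prod.instIsAddHaarMeasure _ _

section ChangeOfVariables

variable {E : Type*} [NormedAddCommGroup E] [NormedSpace ℝ E]

theorem integrableOn_octant_iff_comp_pairwiseProd {g : ℝ × ℝ × ℝ → E} :
    IntegrableOn g octant ↔
      IntegrableOn (fun p => (2 * (p.1 * p.2.1 * p.2.2)) • g (pairwiseProd p)) octant := by
  have h := integrableOn_image_iff_integrableOn_abs_det_fderiv_smul volume measurableSet_octant
    (fun p _ => (hasFDerivAt_pairwiseProd p).hasFDerivWithinAt) injOn_pairwiseProd g
  rw [pairwiseProd_image_octant] at h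
  rw [h]
  exact integrableOn_congr_fun (fun p hp => by rw [abs_det_pairwiseProdFDeriv hp])
    measurableSet_octant

theorem setIntegral_octant_eq_comp_pairwiseProd (g : ℝ × ℝ × ℝ → E) :
    ∫ q in octant, g q = ∫ p in octant, (2 * (p.1 * p.2.1 * p.2.2)) • g (pairwiseProd p) := by
  have h := integral_image_eq_integral_abs_det_fderiv_smul volume measurableSet_octant
    (fun p _ => (hasFDerivAt_pairwiseProd p).hasFDerivWithinAt) injOn_pairwiseProd g
  rw [pairwiseProd_image_octant] at h
  rw [h]
  exact setIntegral_congr_fun measurableSet_octant fun p hp => by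
    rw [abs_det_pairwiseProdFDeriv hp]

end ChangeOfVariables

theorem volume_restrict_octant_eq_prod :
    volume.restrict octant = (volume.restrict (Ioi (0 : ℝ))).prod
      ((volume.restrict (Ioi (0 : ℝ))).prod (volume.restrict (Ioi (0 : ℝ)))) := by
  rw [Measure.prod_restrict, Measure.prod_restrict, ← Measure.volume_eq_prod,
    ← Measure.volume_eq_prod]
  rfl

theorem integrableOn_octant_mul {f g h : ℝ → ℝ} (hf : IntegrableOn f (Ioi 0))
    (hg : IntegrableOn g (Ioi 0)) (hh : IntegrableOn h (Ioi 0)) :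
    IntegrableOn (fun p : ℝ × ℝ × ℝ => f p.1 * (g p.2.1 * h p.2.2)) octant := by
  rw [IntegrableOn, volume_restrict_octant_eq_prod]
  exact hf.mul_prod (hg.mul_prod hh)

theorem setIntegral_octant_mul (f g h : ℝ → ℝ) :
    ∫ p in octant, f p.1 * (g p.2.1 * h p.2.2) =
      (∫ t in Ioi 0, f t) * ((∫ t in Ioi 0, g t) * ∫ t in Ioi 0, h t) := by
  rw [volume_restrict_octant_eq_prod,
    integral_prod_mul (L := ℝ) f (fun q : ℝ × ℝ => g q.1 * h q.2), integral_prod_mul (L := ℝ) g h]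

noncomputable def pairKernel (α t : ℝ) : ℝ := t ^ (α / 2 - 1) / (1 + t)

theorem two_mul_tripleF_eq (α : ℝ) {p : ℝ × ℝ × ℝ} (hp : p ∈ octant) :
    2 * tripleF α p = (2 * (p.1 * p.2.1 * p.2.2)) • (pairKernel α (pairwiseProd p).1 *
      (pairKernel α (pairwiseProd p).2.1 * pairKernel α (pairwiseProd p).2.2)) := by
  obtain ⟨x, y, z⟩ := p
  obtain ⟨hx, hy, hz⟩ := hp
  simp only [mem_Ioi] at hx hy hz
  have hsplit : ∀ t : ℝ, 0 < t → t ^ (α - 1) = t ^ (α / 2 - 1) * t ^ (α / 2 - 1) * t := by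
    intro t ht
    rw [← rpow_add ht, ← rpow_add_one ht.ne']
    ring_nf
  simp only [pairKernel, pairwiseProd, tripleF, smul_eq_mul]
  rw [mul_rpow hx.le hy.le, mul_rpow hx.le hz.le, mul_rpow hy.le hz.le, hsplit x hx,
    hsplit y hy, hsplit z hz]
  field_simp

theorem tripleI_eq (α : ℝ) : tripleI α = (∫ t in Ioi 0, pairKernel α t) ^ 3 / 2 := by
  rw [pow_three, ← setIntegral_octant_mul, setIntegral_octant_eq_comp_pairwiseProd,
    ← setIntegral_congr_fun measurableSet_octant fun p hp => two_mul_tripleF_eq α hp,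
    integral_const_mul, mul_div_cancel_left₀ _ two_ne_zero]
  rfl

theorem integrableOn_tripleF {α : ℝ} (hα0 : 0 < α) (hα2 : α < 2) :
    IntegrableOn (tripleF α) octant := by
  have hk : IntegrableOn (pairKernel α) (Ioi 0) :=
    integrableOn_rpow_div_one_add (by linarith) (by linarith)
  have h := integrableOn_octant_iff_comp_pairwiseProd.1 (integrableOn_octant_mul hk hk hk)
  rw [← integrableOn_congr_fun (fun p hp => two_mul_tripleF_eq α hp) measurableSet_octant] at h
  exact (integrable_const_mul_iff (isUnit_iff_ne_zero.2 two_ne_zero) _).1 h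

/-- There is `α₀ > 0` such that for `α ∈ (0, α₀)` the triple integral
`I(α) = ∭_{(0,∞)³} (xyz)^{α−1}/((1+xy)(1+xz)(1+yz))` is finite, and the limit
`Q₀ = lim_{α→0⁺} α³ I(α)` exists, is finite and strictly positive. -/
theorem triple_integral_limit_exists :
    ∃ α₀ > (0 : ℝ),
      (∀ α ∈ Set.Ioo (0 : ℝ) α₀,
        IntegrableOn (tripleF α) (Set.Ioi (0 : ℝ) ×ˢ Set.Ioi (0 : ℝ) ×ˢ Set.Ioi (0 : ℝ))) ∧
      ∃ Q₀ : ℝ, 0 < Q₀ ∧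
        Tendsto (fun α : ℝ => α ^ 3 * tripleI α) (nhdsWithin 0 (Set.Ioi 0)) (nhds Q₀) := by
  refine ⟨2, two_pos, fun α hα => integrableOn_tripleF hα.1 hα.2, 4, four_pos, ?_⟩
  have hhalf : Tendsto (fun α : ℝ => α / 2) (𝓝[>] 0) (𝓝[>] 0) := by
    simpa [div_eq_mul_inv] using
      TendstoNhdsWithinIoi.mul_const (inv_pos.2 two_pos) (tendsto_id (x := 𝓝[>] (0 : ℝ)))
  have hlim := ((tendsto_mul_integral_rpow_div_one_add.comp hhalf).pow 3).const_mul 4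
  rw [one_pow, mul_one] at hlim
  refine hlim.congr fun α => ?_
  simp only [Function.comp_apply, tripleI_eq, pairKernel]
  ring
end

section
/- For every real α ∈ (0, 1) and every real c > 0, the sequence k ↦ k^{α+1} · (∫_c^∞ t^{k−α−1} e^{−t} dt) / k!, indexed by k ∈ ℕ with k ≥ 1, tends to 1 as k → ∞. -/
/-!
Split `Γ(s) = γ(s, c) + Γ(s, c)` at `s = k - α`. The lower part is at most `c ^ s`, which is
negligible against `k! / k ^ (α + 1)`. For the complete part, `Γ(k + 2 - α)` is
`(k + 1 - α)(k - α) Γ(k - α)`, and Euler's limit formula for `Γ(1 - α)` says exactly that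
`k ^ (1 - α) k! / Γ(k + 2 - α) → 1`, i.e. `k ^ (α + 1) Γ(k - α) / k! → 1`.
-/

open Real MeasureTheory Filter

namespace Real

open Set Nat Finset

noncomputable def lowerIncGamma (s x : ℝ) : ℝ := ∫ t in Ioc 0 x, t ^ (s - 1) * exp (-t)

noncomputable def upperIncGamma (s x : ℝ) : ℝ := ∫ t in Ioi x, t ^ (s - 1) * exp (-t)

theorem integrableOn_rpow_mul_exp_neg {s : ℝ} (hs : 0 < s) :
    IntegrableOn (fun t => t ^ (s - 1) * exp (-t)) (Ioi 0) := by
  simpa only [mul_comm] using GammaIntegral_convergent hs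

theorem lowerIncGamma_add_upperIncGamma {s x : ℝ} (hs : 0 < s) (hx : 0 ≤ x) :
    lowerIncGamma s x + upperIncGamma s x = Gamma s := by
  have hint := integrableOn_rpow_mul_exp_neg hs
  rw [lowerIncGamma, upperIncGamma, ← setIntegral_union (Ioc_disjoint_Ioi le_rfl) measurableSet_Ioi
    (hint.mono_set Ioc_subset_Ioi_self) (hint.mono_set (Ioi_subset_Ioi hx)),
    Ioc_union_Ioi_eq_Ioi hx, Gamma_eq_integral hs]
  simp only [mul_comm]

theorem norm_lowerIncGamma_le {s x : ℝ} (hs : 1 ≤ s) (hx : 0 ≤ x) :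
    ‖lowerIncGamma s x‖ ≤ x ^ s := by
  have hbound : ∀ t ∈ Ioc 0 x, ‖t ^ (s - 1) * exp (-t)‖ ≤ x ^ (s - 1) := fun t ⟨ht0, htx⟩ => by
    rw [norm_mul, norm_of_nonneg (by positivity), norm_of_nonneg (exp_pos _).le]
    calc t ^ (s - 1) * exp (-t) ≤ x ^ (s - 1) * 1 := by
          gcongr
          exact exp_le_one_iff.2 (by linarith)
      _ = x ^ (s - 1) := mul_one _
  calc ‖lowerIncGamma s x‖ ≤ x ^ (s - 1) * volume.real (Ioc 0 x) :=
        norm_setIntegral_le_of_norm_le_const measure_Ioc_lt_top hbound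
    _ = x ^ s := by
      rcases hx.eq_or_lt with rfl | hx
      · simp [zero_rpow (by linarith : s ≠ 0)]
      rw [volume_real_Ioc_of_le hx.le, sub_zero, ← rpow_add_one hx.ne', sub_add_cancel]

theorem tendsto_rpow_mul_pow_div_factorial (b c : ℝ) :
    Tendsto (fun n : ℕ => (n : ℝ) ^ b * c ^ n / n !) atTop (nhds 0) := by
  have hpoly : Tendsto (fun n : ℕ => (n : ℝ) ^ b * exp (-n)) atTop (nhds 0) := by
    simpa [Function.comp_def] using
      (tendsto_rpow_mul_exp_neg_mul_atTop_nhds_zero b 1 one_pos).comp tendsto_natCast_atTop_atTop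
  have hexp := FloorSemiring.tendsto_pow_div_factorial_atTop (exp 1 * c)
  simpa using (hpoly.mul hexp).congr fun n => by
    rw [mul_pow, ← exp_nat_mul, mul_one, exp_neg]
    field_simp

theorem tendsto_rpow_mul_lowerIncGamma_sub_div_factorial (a b : ℝ) {x : ℝ} (hx : 0 < x) :
    Tendsto (fun n : ℕ => (n : ℝ) ^ b * lowerIncGamma (n - a) x / n !) atTop (nhds 0) := by
  have hbound := (tendsto_rpow_mul_pow_div_factorial b x).div_const (x ^ a)
  rw [zero_div] at hbound
  refine squeeze_zero_norm' ?_ hbound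
  filter_upwards [eventually_ge_atTop ⌈a + 1⌉₊] with n hn
  have hn : 1 ≤ (n : ℝ) - a := by linarith [Nat.ceil_le.1 hn]
  have hlower : ‖lowerIncGamma (n - a) x‖ ≤ x ^ n / x ^ a := by
    simpa only [rpow_sub hx, rpow_natCast] using norm_lowerIncGamma_le hn hx.le
  calc ‖(n : ℝ) ^ b * lowerIncGamma (n - a) x / (n ! : ℝ)‖
      = n ^ b * ‖lowerIncGamma (n - a) x‖ / n ! := by
        rw [norm_div, norm_mul, norm_of_nonneg (by positivity), norm_natCast]
    _ ≤ n ^ b * (x ^ n / x ^ a) / n ! := by gcongr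
    _ = n ^ b * x ^ n / n ! / x ^ a := by ring

theorem Gamma_add_nat_eq_Gamma_mul_prod {s : ℝ} (hs : 0 < s) (n : ℕ) :
    Gamma (s + n) = Gamma s * ∏ j ∈ range n, (s + j) := by
  induction n with
  | zero => simp
  | succ n ih =>
    rw [Nat.cast_succ, ← add_assoc, Gamma_add_one (by positivity), ih, prod_range_succ]
    ring

theorem tendsto_rpow_mul_factorial_div_Gamma_add {s : ℝ} (hs : 0 < s) :
    Tendsto (fun n : ℕ => (n : ℝ) ^ s * n ! / Gamma (s + (n + 1))) atTop (nhds 1) := by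
  have h := (GammaSeq_tendsto_Gamma s).div_const (Gamma s)
  rw [div_self (Gamma_pos_of_pos hs).ne'] at h
  refine h.congr fun n => ?_
  have hprod := Gamma_add_nat_eq_Gamma_mul_prod hs (n + 1)
  push_cast at hprod
  rw [GammaSeq, hprod, div_div, mul_comm (Gamma s)]

theorem tendsto_rpow_mul_Gamma_sub_div_factorial {a : ℝ} (ha : a < 1) :
    Tendsto (fun n : ℕ => (n : ℝ) ^ (a + 1) * Gamma (n - a) / n !) atTop (nhds 1) := by
  have hratio := (tendsto_rpow_mul_factorial_div_Gamma_add (sub_pos.2 ha)).inv₀ one_ne_zero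
  rw [inv_one] at hratio
  have hlim := ((tendsto_natCast_div_add_atTop (1 - a)).mul
    (tendsto_natCast_div_add_atTop (-a))).mul hratio
  rw [mul_one, mul_one] at hlim
  refine hlim.congr' ?_
  filter_upwards [eventually_ge_atTop 1] with n hn
  have hn : (1 : ℝ) ≤ n := by exact_mod_cast hn
  have hna : 0 < (n : ℝ) - a := by linarith
  have hGamma : Gamma (1 - a + (n + 1)) = (n - a + 1) * ((n - a) * Gamma (n - a)) := by
    rw [show 1 - a + (n + 1) = (n - a + 1) + 1 by ring, Gamma_add_one (by positivity),
      Gamma_add_one hna.ne']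
  have hpow : (n : ℝ) ^ (a + 1) = n ^ 2 / n ^ (1 - a) := by
    rw [eq_div_iff (by positivity), ← rpow_add (by positivity), ← rpow_natCast]
    ring_nf
  have : (n : ℝ) + (1 - a) ≠ 0 := by linarith
  have : (n : ℝ) + -a ≠ 0 := by linarith
  rw [hGamma, hpow]
  field_simp
  ring

end Real

/-- For `α ∈ (0, 1)` and `c > 0`, the sequence
`k ↦ k^{α+1} · Γ(k − α, c) / k!`, where `Γ(s, x) = ∫_x^∞ t^{s−1} e^{−t} dt` is the upper
incomplete gamma function, tends to `1` as `k → ∞`; i.e. the degree distribution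
`P_k ∝ Γ(k − α, θ)/k!` decays as the power law `k^{−α−1}`. -/
theorem incGamma_powerlaw_asymptotics
    (α : ℝ) (hα : α ∈ Set.Ioo (0 : ℝ) 1) (c : ℝ) (hc : 0 < c) :
    Tendsto
      (fun k : ℕ =>
        (k : ℝ) ^ (α + 1) *
          (∫ t in Set.Ioi c, t ^ ((k : ℝ) - α - 1) * Real.exp (-t)) /
          (Nat.factorial k : ℝ))
      atTop (nhds 1) := by
  have hlim := (tendsto_rpow_mul_Gamma_sub_div_factorial hα.2).sub
    (tendsto_rpow_mul_lowerIncGamma_sub_div_factorial α (α + 1) hc)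
  rw [sub_zero] at hlim
  refine hlim.congr' ?_
  filter_upwards [eventually_ge_atTop 1] with k hk
  have hk : 0 < (k : ℝ) - α := by
    linarith [hα.2, (Nat.one_le_cast.2 hk : (1 : ℝ) ≤ k)]
  rw [← lowerIncGamma_add_upperIncGamma hk hc.le, upperIncGamma]
  ring
end

section
/- Let a > 1 be real. For μ > 0 define the probability density ρ_μ(ε) = a e^{a(ε − μ/2)}/(2 sinh(aμ/2)) on [0, μ]. Then lim_{μ→∞} e^{μ} ∬_{[0,μ]²} ρ_μ(ε) ρ_μ(ε') / (e^{ε + ε' − μ} + 1) dε dε' = (a/(a − 1))². -/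
/-!
Substituting `ε = μ - x`, `ε' = μ - y` gives `ρ_μ(μ - x) = a e^{-ax} / (1 - e^{-aμ})` and
`1 / (e^{μ - x - y} + 1) = e^{-μ} e^{x + y} / (1 + e^{x + y - μ})`, so `e^μ` times the edge density
is `(1 - e^{-aμ})⁻² a²` times the integral over `[0, μ]²` of
`e^{-(a-1)(x+y)} / (1 + e^{x + y - μ})`. This integrand is dominated by `e^{-(a-1)(x+y)}` on the
quadrant and converges to it pointwise, so by dominated convergence the integral tends to `(a - 1)⁻²`.
-/

open Real MeasureTheory Filter Set
open scoped Topology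

section Reflection

variable {E : Type*} [NormedAddCommGroup E] [NormedSpace ℝ E]

theorem setIntegral_Icc_zero_comp_sub_left (g : ℝ → E) (μ : ℝ) :
    ∫ x in Icc 0 μ, g (μ - x) = ∫ x in Icc 0 μ, g x := by
  rcases le_or_gt 0 μ with hμ | hμ
  · simp only [integral_Icc_eq_integral_Ioc, ← intervalIntegral.integral_of_le hμ,
      intervalIntegral.integral_comp_sub_left g μ, sub_self, sub_zero]
  · simp [Icc_eq_empty_of_lt hμ]

theorem setIntegral_Icc_zero_comp_sub_left₂ (g : ℝ → ℝ → E) (μ : ℝ) :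
    ∫ x in Icc 0 μ, ∫ y in Icc 0 μ, g (μ - x) (μ - y) =
      ∫ x in Icc 0 μ, ∫ y in Icc 0 μ, g x y := by
  simp only [setIntegral_Icc_zero_comp_sub_left (g _)]
  exact setIntegral_Icc_zero_comp_sub_left (fun x => ∫ y in Icc 0 μ, g x y) μ

end Reflection

noncomputable def stateDensity (a μ ε : ℝ) : ℝ :=
  a * exp (a * (ε - μ / 2)) / (2 * sinh (a * μ / 2))

/-- The edge density `2L/N²` of the network at chemical potential `μ`. -/
noncomputable def edgeDensity (a μ : ℝ) : ℝ :=
  ∫ ε in Icc 0 μ, ∫ ε' in Icc 0 μ,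
    stateDensity a μ ε * stateDensity a μ ε' / (exp (ε + ε' - μ) + 1)

noncomputable def fermiKernel (b μ x y : ℝ) : ℝ :=
  exp (-b * x) * exp (-b * y) / (1 + exp (x + y - μ))

theorem stateDensity_sub_left (a μ x : ℝ) :
    stateDensity a μ (μ - x) = (1 - exp (-(a * μ)))⁻¹ * (a * exp (-a * x)) := by
  have hsinh : 2 * sinh (a * μ / 2) = exp (a * μ / 2) * (1 - exp (-(a * μ))) := by
    rw [sinh_eq, mul_sub, mul_one, ← exp_add]
    ring_nf
  have hnum : a * exp (a * (μ - x - μ / 2)) = exp (a * μ / 2) * (a * exp (-a * x)) := by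
    rw [mul_left_comm, ← exp_add]
    ring_nf
  rw [stateDensity, hsinh, hnum, mul_div_mul_left _ _ (exp_ne_zero _), div_eq_inv_mul]

theorem stateDensity_sub_left_mul_div (a μ x y : ℝ) :
    stateDensity a μ (μ - x) * stateDensity a μ (μ - y) / (exp (μ - x + (μ - y) - μ) + 1) =
      exp (-μ) * ((1 - exp (-(a * μ)))⁻¹ ^ 2 * a ^ 2) * fermiKernel (a - 1) μ x y := by
  have hfermi : exp (μ - x + (μ - y) - μ) + 1 = exp (μ - x - y) * (1 + exp (x + y - μ)) := by
    rw [mul_add, mul_one, ← exp_add]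
    ring_nf
    rw [exp_zero, add_comm]
  rw [stateDensity_sub_left, stateDensity_sub_left, hfermi, fermiKernel]
  field_simp
  simp only [mul_assoc, ← exp_add]
  ring_nf

theorem fermiKernel_nonneg (b μ x y : ℝ) : 0 ≤ fermiKernel b μ x y := by
  unfold fermiKernel
  positivity

theorem fermiKernel_le (b μ x y : ℝ) : fermiKernel b μ x y ≤ exp (-b * x) * exp (-b * y) :=
  div_le_self (by positivity) (le_add_of_nonneg_right (exp_nonneg _))

theorem continuous_fermiKernel (b μ : ℝ) : Continuous fun z : ℝ × ℝ => fermiKernel b μ z.1 z.2 :=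
  Continuous.div (by fun_prop) (by fun_prop) fun _ => (add_pos one_pos (exp_pos _)).ne'

theorem tendsto_fermiKernel_atTop (b x y : ℝ) :
    Tendsto (fun μ => fermiKernel b μ x y) atTop (𝓝 (exp (-b * x) * exp (-b * y))) := by
  have hfermi : Tendsto (fun μ => 1 + exp (x + y - μ)) atTop (𝓝 1) := by
    simpa [sub_eq_add_neg] using
      (tendsto_exp_atBot.comp (tendsto_atBot_add_const_left _ _ tendsto_neg_atTop_atBot)).const_add 1
  have h := (tendsto_const_nhds (x := exp (-b * x) * exp (-b * y))).div hfermi one_ne_zero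
  rw [div_one] at h
  exact h

theorem integrableOn_exp_neg_mul_prod {b : ℝ} (hb : 0 < b) :
    IntegrableOn (fun z : ℝ × ℝ => exp (-b * z.1) * exp (-b * z.2)) (Ici 0 ×ˢ Ici 0) := by
  have h : IntegrableOn (fun x => exp (-b * x)) (Ici 0) :=
    (integrableOn_Ici_iff_integrableOn_Ioi).2 (integrableOn_exp_mul_Ioi (neg_neg_of_pos hb) 0)
  rw [IntegrableOn, Measure.volume_eq_prod, ← Measure.prod_restrict]
  exact h.mul_prod h

theorem setIntegral_exp_neg_mul_prod {b : ℝ} (hb : 0 < b) :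
    ∫ z in Ici 0 ×ˢ Ici 0, exp (-b * z.1) * exp (-b * z.2) = b⁻¹ ^ 2 := by
  have h : ∫ x in Ici 0, exp (-b * x) = b⁻¹ := by
    rw [integral_Ici_eq_integral_Ioi, integral_exp_mul_Ioi (neg_neg_of_pos hb)]
    simp
  rw [Measure.volume_eq_prod,
    setIntegral_prod_mul (fun x => exp (-b * x)) (fun x => exp (-b * x)), h, sq]

theorem tendsto_indicator_fermiKernel_atTop (b : ℝ) (z : ℝ × ℝ) :
    Tendsto (fun μ => (Icc 0 μ ×ˢ Icc 0 μ).indicator (fun z => fermiKernel b μ z.1 z.2) z) atTop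
      (𝓝 ((Ici 0 ×ˢ Ici 0).indicator (fun z => exp (-b * z.1) * exp (-b * z.2)) z)) := by
  by_cases hz : z ∈ Ici 0 ×ˢ Ici 0
  · rw [indicator_of_mem hz]
    refine (tendsto_fermiKernel_atTop b z.1 z.2).congr' ?_
    filter_upwards [eventually_ge_atTop (max z.1 z.2)] with μ hμ
    have hzμ : z ∈ Icc 0 μ ×ˢ Icc 0 μ :=
      ⟨⟨hz.1, le_of_max_le_left hμ⟩, ⟨hz.2, le_of_max_le_right hμ⟩⟩
    rw [indicator_of_mem hzμ]
  · have hz' (μ : ℝ) : z ∉ Icc 0 μ ×ˢ Icc 0 μ := fun h => hz ⟨h.1.1, h.2.1⟩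
    simp only [indicator_of_notMem hz, indicator_of_notMem (hz' _), tendsto_const_nhds]

theorem tendsto_setIntegral_fermiKernel_atTop {b : ℝ} (hb : 0 < b) :
    Tendsto (fun μ => ∫ z in Icc 0 μ ×ˢ Icc 0 μ, fermiKernel b μ z.1 z.2) atTop (𝓝 (b⁻¹ ^ 2)) := by
  have hmeas : MeasurableSet (Ici (0 : ℝ) ×ˢ Ici (0 : ℝ)) := measurableSet_Ici.prod measurableSet_Ici
  rw [← setIntegral_exp_neg_mul_prod hb, ← integral_indicator hmeas]
  simp only [← integral_indicator (measurableSet_Icc.prod measurableSet_Icc)]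
  refine tendsto_integral_filter_of_dominated_convergence _
    (Eventually.of_forall fun μ => ((continuous_fermiKernel b μ).aestronglyMeasurable).indicator
      (measurableSet_Icc.prod measurableSet_Icc))
    (Eventually.of_forall fun μ => ae_of_all _ fun z => ?_)
    ((integrableOn_exp_neg_mul_prod hb).integrable_indicator hmeas)
    (ae_of_all _ (tendsto_indicator_fermiKernel_atTop b))
  rw [norm_indicator_eq_indicator_norm]
  refine (indicator_le_indicator ?_).trans (indicator_le_indicator_of_subset
    (Set.prod_mono Icc_subset_Ici_self Icc_subset_Ici_self) (fun z => by positivity) z)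
  rw [norm_of_nonneg (fermiKernel_nonneg b μ z.1 z.2)]
  exact fermiKernel_le b μ z.1 z.2

theorem exp_mul_edgeDensity (a μ : ℝ) :
    exp μ * edgeDensity a μ = (1 - exp (-(a * μ)))⁻¹ ^ 2 * a ^ 2 *
      ∫ z in Icc 0 μ ×ˢ Icc 0 μ, fermiKernel (a - 1) μ z.1 z.2 := by
  have hK : IntegrableOn (fun z : ℝ × ℝ => fermiKernel (a - 1) μ z.1 z.2) (Icc 0 μ ×ˢ Icc 0 μ) :=
    (continuous_fermiKernel _ μ).continuousOn.integrableOn_compact (isCompact_Icc.prod isCompact_Icc)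
  rw [edgeDensity, ← setIntegral_Icc_zero_comp_sub_left₂]
  simp only [stateDensity_sub_left_mul_div, integral_const_mul]
  rw [Measure.volume_eq_prod, setIntegral_prod _ hK, ← mul_assoc, ← mul_assoc, ← exp_add,
    add_neg_cancel, exp_zero, one_mul]

/-- For the asymptotically sparse Type A network with `a = γ − 1 > 1`, density of states
`ρ_μ(ε) = a e^{a(ε − μ/2)}/(2 sinh(aμ/2))` on `[0, μ]` and Fermi–Dirac connection
probability `1/(e^{ε + ε' − μ} + 1)`, the rescaled edge density converges:
`e^μ ∬ ρ_μ(ε) ρ_μ(ε')/(e^{ε + ε' − μ} + 1) dε dε' → (a/(a − 1))²` as `μ → ∞`. -/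
theorem sparse_network_nu_constant (a : ℝ) (ha : 1 < a) :
    Tendsto
      (fun μ : ℝ =>
        Real.exp μ *
          ∫ ε in Set.Icc (0 : ℝ) μ, ∫ ε' in Set.Icc (0 : ℝ) μ,
            (a * Real.exp (a * (ε - μ / 2)) / (2 * Real.sinh (a * μ / 2))) *
              (a * Real.exp (a * (ε' - μ / 2)) / (2 * Real.sinh (a * μ / 2))) /
              (Real.exp (ε + ε' - μ) + 1))
      atTop (nhds ((a / (a - 1)) ^ 2)) := by
  change Tendsto (fun μ => exp μ * edgeDensity a μ) atTop _
  have hprefactor : Tendsto (fun μ => (1 - exp (-(a * μ)))⁻¹ ^ 2 * a ^ 2) atTop (𝓝 (a ^ 2)) := by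
    have h : Tendsto (fun μ => exp (-(a * μ))) atTop (𝓝 0) :=
      tendsto_exp_atBot.comp (tendsto_neg_atTop_atBot.comp
        (tendsto_id.const_mul_atTop (by linarith)))
    simpa using
      ((((tendsto_const_nhds (x := (1 : ℝ))).sub h).inv₀ (by norm_num)).pow 2).mul_const (a ^ 2)
  simp only [exp_mul_edgeDensity]
  convert hprefactor.mul (tendsto_setIntegral_fermiKernel_atTop (sub_pos.2 ha)) using 2
  ring
end
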